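/- (Lemma: spanning tree bound.) Let c : E → ℝ be any nonnegative edge cost. For every feasible solution x of the path-variant Held-Karp relaxation with respect to s and t, there exists a spanning tree H of the complete graph on V with c(H) ≤ c(x); in particular, the cost of a minimum spanning tree is at most c(x). -/

import Mathlib

/-!
Summing the degree constraints over `S` and using the cut constraints gives `x(E) = n - 1` and
`x(E(S)) ≤ |S| - 1` for every nonempty `S`, so for any partition of the vertices into `k` classes
the edges between classes carry `x`-weight at least `k - 1`. Sort the edges by cost and run
Kruskal's algorithm. If the first `j` edges form a graph with `k_j` components, the tree uses at
most `k_j - 1` of the remaining edges, while the edges between those components, all among the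
remaining ones, carry weight at least `k_j - 1`. So every suffix of the sorted order meets the
tree in at most its `x`-weight, and Abel summation along the sorted order gives `c(T) ≤ c(x)`.
-/

open Finset

namespace TSPPath

noncomputable section
open scoped Classical

/-- Edge set of the complete graph on `Fin n`: all unordered pairs of distinct vertices. -/
def Edges (n : ℕ) : Finset (Sym2 (Fin n)) := Finset.univ.filter (fun e => ¬ e.IsDiag)

/-- `cutSet n S` is `δ(S)`: the edges with exactly one endpoint in `S`. -/
def cutSet (n : ℕ) (S : Finset (Fin n)) : Finset (Sym2 (Fin n)) :=
  (Edges n).filter (fun e => ∃ u v : Fin n, e = s(u, v) ∧ u ∈ S ∧ v ∉ S)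

/-- `inSet n S` is `E(S)`: the edges with both endpoints in `S`. -/
def inSet (n : ℕ) (S : Finset (Fin n)) : Finset (Sym2 (Fin n)) :=
  (Edges n).filter (fun e => ∀ v ∈ e, v ∈ S)

/-- Degree of a vertex in an edge set. -/
def deg (n : ℕ) (H : Finset (Sym2 (Fin n))) (v : Fin n) : ℕ :=
  (H.filter (fun e => v ∈ e)).card

/-- Degree of a vertex in an edge multiset (counting multiplicity). -/
def mdeg (n : ℕ) (L : Multiset (Sym2 (Fin n))) (v : Fin n) : ℕ :=
  (L.filter (fun e => v ∈ e)).card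

/-- Feasibility for the path-variant Held–Karp relaxation with endpoints `s, t`. -/
def HKPathFeasible (n : ℕ) (s t : Fin n) (x : Sym2 (Fin n) → ℝ) : Prop :=
  (∀ e, 0 ≤ x e) ∧
  (∑ e ∈ cutSet n {s}, x e = 1) ∧
  (∑ e ∈ cutSet n {t}, x e = 1) ∧
  (∀ v : Fin n, v ≠ s → v ≠ t → ∑ e ∈ cutSet n {v}, x e = 2) ∧
  (∀ S : Finset (Fin n), S.Nonempty → S ≠ Finset.univ →
      ((s ∈ S ∧ t ∉ S) ∨ (s ∉ S ∧ t ∈ S)) → 1 ≤ ∑ e ∈ cutSet n S, x e) ∧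
  (∀ S : Finset (Fin n), S.Nonempty → S ≠ Finset.univ →
      ¬((s ∈ S ∧ t ∉ S) ∨ (s ∉ S ∧ t ∈ S)) → 2 ≤ ∑ e ∈ cutSet n S, x e)

/-- `c` is a metric: nonnegative, symmetric, vanishing on the diagonal, triangle inequality. -/
def IsMetric (n : ℕ) (c : Fin n → Fin n → ℝ) : Prop :=
  (∀ u v, 0 ≤ c u v) ∧ (∀ u v, c u v = c v u) ∧ (∀ u, c u u = 0) ∧
  (∀ u v w, c u w ≤ c u v + c v w)

/-- Cost of an unordered edge (defined by symmetrization, which agrees with `c u v`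
whenever `c` is symmetric). -/
def ecost (n : ℕ) (c : Fin n → Fin n → ℝ) (e : Sym2 (Fin n)) : ℝ :=
  Sym2.lift ⟨fun u v => (c u v + c v u) / 2, by intro u v; ring⟩ e

/-- `c(x) = ∑_{e ∈ E} x_e c(e)`. -/
def xcost (n : ℕ) (c : Fin n → Fin n → ℝ) (x : Sym2 (Fin n) → ℝ) : ℝ :=
  ∑ e ∈ Edges n, x e * ecost n c e

/-- `c(F) = ∑_{e ∈ F} c(e)` for an edge set `F`. -/
def fcost (n : ℕ) (c : Fin n → Fin n → ℝ) (F : Finset (Sym2 (Fin n))) : ℝ :=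
  ∑ e ∈ F, ecost n c e

/-- `H` is (the edge set of) a spanning tree of the complete graph on `Fin n`. -/
def IsSpanningTree (n : ℕ) (H : Finset (Sym2 (Fin n))) : Prop :=
  H ⊆ Edges n ∧ (SimpleGraph.fromEdgeSet (H : Set (Sym2 (Fin n)))).Connected ∧
    H.card = n - 1

/-- The wrong-parity set of an edge set `H`: internal vertices of odd degree
together with the endpoints of even degree. -/
def wrongParity (n : ℕ) (s t : Fin n) (H : Finset (Sym2 (Fin n))) : Finset (Fin n) :=
  Finset.univ.filter (fun v =>
    if v = s ∨ v = t then Even (deg n H v) else Odd (deg n H v))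

/-- `M` is a perfect matching on the vertex set `T`: vertex-disjoint edges covering
exactly the vertices of `T`. -/
def IsPerfectMatchingOn (n : ℕ) (T : Finset (Fin n)) (M : Finset (Sym2 (Fin n))) : Prop :=
  M ⊆ Edges n ∧ (∀ v ∈ T, deg n M v = 1) ∧ (∀ v : Fin n, v ∉ T → deg n M v = 0)

/-- `J` is a `T`-join: exactly the vertices of `T` have odd degree in `J`. -/
def IsTJoin (n : ℕ) (T : Finset (Fin n)) (J : Finset (Sym2 (Fin n))) : Prop :=
  J ⊆ Edges n ∧ ∀ v : Fin n, Odd (deg n J v) ↔ v ∈ T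

/-- There is a Hamiltonian path from `s` to `t` in the complete graph on `Fin n`
of cost (w.r.t. the metric `c`) at most `B`. -/
def ExistsHamPath (n : ℕ) (s t : Fin n) (c : Fin n → Fin n → ℝ) (B : ℝ) : Prop :=
  ∃ p : (⊤ : SimpleGraph (Fin n)).Walk s t,
    p.IsHamiltonian ∧ (p.edges.map (ecost n c)).sum ≤ B

/-- Connectivity of the multigraph `(V, L)` (equivalently, of its support graph,
which must span all of `Fin n`). -/
def MConnected (n : ℕ) (L : Multiset (Sym2 (Fin n))) : Prop :=
  (SimpleGraph.fromEdgeSet {e | e ∈ L}).Connected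

/-- The multiset of edges traversed by the walk given by a vertex list `w`. -/
def walkEdges (n : ℕ) (w : List (Fin n)) : Multiset (Sym2 (Fin n)) :=
  ((w.zip w.tail).map (Function.uncurry Sym2.mk) : List (Sym2 (Fin n)))

/-- `w` is an Eulerian trail from `s` to `t` of the edge multiset `L`: a walk from `s`
to `t` whose multiset of traversed edges is exactly `L` (with multiplicity). -/
def IsEulerianTrail (n : ℕ) (L : Multiset (Sym2 (Fin n))) (s t : Fin n)
    (w : List (Fin n)) : Prop :=
  w.head? = some s ∧ w.getLast? = some t ∧ walkEdges n w = L

end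
end TSPPath

namespace SimpleGraph

variable {V : Type*} {G : SimpleGraph V} {u v : V}

theorem Reachable.of_sup_edge {a b : V} (h : (G ⊔ edge u v).Reachable a b) :
    G.Reachable a b ∨ (G.Reachable a u ∧ G.Reachable v b) ∨
      (G.Reachable a v ∧ G.Reachable u b) := by
  obtain ⟨p⟩ := h
  induction p with
  | nil => exact .inl .rfl
  | @cons a a' b hadj _ ih =>
    rw [sup_adj, edge_adj] at hadj
    rcases hadj with hG | ⟨⟨rfl, rfl⟩ | ⟨rfl, rfl⟩, -⟩
    · have h := hG.reachable
      rcases ih with h' | ⟨h₁, h₂⟩ | ⟨h₁, h₂⟩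
      exacts [.inl (h.trans h'), .inr (.inl ⟨h.trans h₁, h₂⟩),
        .inr (.inr ⟨h.trans h₁, h₂⟩)]
    · rcases ih with h' | ⟨h₁, h₂⟩ | ⟨h₁, h₂⟩
      exacts [.inr (.inl ⟨.rfl, h'⟩), .inl (h₁.symm.trans h₂), .inl h₂]
    · rcases ih with h' | ⟨h₁, h₂⟩ | ⟨h₁, h₂⟩
      exacts [.inr (.inr ⟨.rfl, h'⟩), .inl h₂, .inl (h₁.symm.trans h₂)]

theorem card_connectedComponent_sup_edge [Finite V] (h : ¬G.Reachable u v) :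
    Nat.card (G ⊔ edge u v).ConnectedComponent + 1 = Nat.card G.ConnectedComponent := by
  classical
  set φ := ConnectedComponent.map (Hom.ofLE (le_sup_left : G ≤ G ⊔ edge u v))
  have hφ : ∀ a, φ (G.connectedComponentMk a) = (G ⊔ edge u v).connectedComponentMk a :=
    fun _ => rfl
  have huv : (G ⊔ edge u v).Reachable u v :=
    Adj.reachable ((sup_adj _ _ _ _).2 (.inr ((edge_adj _ _ _ _).2
      ⟨.inl ⟨rfl, rfl⟩, fun huv => h (huv ▸ .rfl)⟩)))
  -- `φ` merges the components of `u` and `v` and nothing else, so it is a bijection once the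
  -- component of `v` is removed.
  let f : {C // C ≠ G.connectedComponentMk v} → (G ⊔ edge u v).ConnectedComponent :=
    fun C => φ C
  have hf : f.Bijective := by
    constructor
    · rintro ⟨C, hC⟩ ⟨D, hD⟩ hCD
      induction C using ConnectedComponent.ind with | _ a => ?_
      induction D using ConnectedComponent.ind with | _ b => ?_
      simp only [f, hφ, ne_eq, ConnectedComponent.eq] at hCD hC hD
      rcases hCD.of_sup_edge with hab | ⟨-, hvb⟩ | ⟨hav, -⟩
      · exact Subtype.ext (ConnectedComponent.sound hab)
      · exact absurd hvb.symm hD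
      · exact absurd hav hC
    · intro C'
      induction C' using ConnectedComponent.ind with | _ a => ?_
      by_cases hav : G.Reachable a v
      · refine ⟨⟨G.connectedComponentMk u, by simpa [ConnectedComponent.eq] using h⟩, ?_⟩
        simp only [f, hφ, ConnectedComponent.eq]
        exact huv.trans (hav.mono le_sup_left).symm
      · exact ⟨⟨G.connectedComponentMk a, by simpa [ConnectedComponent.eq] using hav⟩, rfl⟩
  rw [← Nat.card_congr (Equiv.ofBijective f hf), ← Finite.card_option]
  exact Nat.card_congr (Equiv.optionSubtypeNe _)

theorem card_connectedComponent_bot :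
    Nat.card (⊥ : SimpleGraph V).ConnectedComponent = Nat.card V := by
  refine (Nat.card_congr (Equiv.ofBijective _ ⟨fun a b h => ?_, Quot.mk_surjective⟩)).symm
  exact reachable_bot.1 (ConnectedComponent.exact h)

theorem Connected.card_connectedComponent (h : G.Connected) :
    Nat.card G.ConnectedComponent = 1 :=
  have := h.preconnected.subsingleton_connectedComponent
  have := h.nonempty
  Nat.card_unique

theorem isDiag_map_connectedComponentMk_of_le {G' : SimpleGraph V} (hle : G ≤ G')
    {e : Sym2 V} (he : (e.map G.connectedComponentMk).IsDiag) :
    (e.map G'.connectedComponentMk).IsDiag := by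
  induction e using Sym2.ind with | _ a b => ?_
  simp only [Sym2.map_mk, Sym2.mk_isDiag_iff, ConnectedComponent.eq] at he ⊢
  exact he.mono hle

theorem isDiag_map_connectedComponentMk_fromEdgeSet {s : Set (Sym2 V)} {e : Sym2 V}
    (he : e ∈ s) : (e.map (fromEdgeSet s).connectedComponentMk).IsDiag := by
  induction e using Sym2.ind with | _ a b => ?_
  simp only [Sym2.map_mk, Sym2.mk_isDiag_iff, ConnectedComponent.eq]
  by_cases hab : a = b
  · exact hab ▸ .rfl
  · exact ((fromEdgeSet_adj s).2 ⟨he, hab⟩).reachable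

end SimpleGraph

section Kruskal

open SimpleGraph

variable {V : Type*} [DecidableEq V]

-- `(e.map G.connectedComponentMk).IsDiag` says that both ends of `e` lie in one component of `G`.
open Classical in
noncomputable def kruskalStep (F : Finset (Sym2 V)) (e : Sym2 V) : Finset (Sym2 V) :=
  if (e.map (fromEdgeSet (F : Set (Sym2 V))).connectedComponentMk).IsDiag then F
  else insert e F

noncomputable def kruskal (F : Finset (Sym2 V)) (l : List (Sym2 V)) : Finset (Sym2 V) :=
  l.foldl kruskalStep F

theorem kruskal_append (F : Finset (Sym2 V)) (l₁ l₂ : List (Sym2 V)) :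
    kruskal F (l₁ ++ l₂) = kruskal (kruskal F l₁) l₂ :=
  List.foldl_append

theorem subset_kruskalStep (F : Finset (Sym2 V)) (e : Sym2 V) : F ⊆ kruskalStep F e := by
  unfold kruskalStep
  split_ifs
  exacts [subset_rfl, Finset.subset_insert e F]

theorem kruskalStep_subset (F : Finset (Sym2 V)) (e : Sym2 V) :
    kruskalStep F e ⊆ insert e F := by
  unfold kruskalStep
  split_ifs
  exacts [Finset.subset_insert e F, subset_rfl]

theorem subset_kruskal (F : Finset (Sym2 V)) (l : List (Sym2 V)) : F ⊆ kruskal F l := by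
  induction l generalizing F with
  | nil => exact subset_rfl
  | cons e l ih => exact (subset_kruskalStep F e).trans (ih _)

theorem kruskal_subset (F : Finset (Sym2 V)) (l : List (Sym2 V)) :
    kruskal F l ⊆ F ∪ l.toFinset := by
  induction l generalizing F with
  | nil => exact Finset.subset_union_left
  | cons e l ih =>
    calc kruskal (kruskalStep F e) l ⊆ kruskalStep F e ∪ l.toFinset := ih _
      _ ⊆ insert e F ∪ l.toFinset := Finset.union_subset_union (kruskalStep_subset F e) le_rfl
      _ = F ∪ (e :: l).toFinset := by
        rw [List.toFinset_cons, Finset.union_insert, Finset.insert_union]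

theorem isDiag_map_connectedComponentMk_kruskal (F : Finset (Sym2 V)) (l : List (Sym2 V))
    {e : Sym2 V} (he : e ∈ F ∪ l.toFinset) :
    (e.map (fromEdgeSet (kruskal F l : Set (Sym2 V))).connectedComponentMk).IsDiag := by
  induction l generalizing F with
  | nil =>
    exact isDiag_map_connectedComponentMk_fromEdgeSet (s := (F : Set (Sym2 V))) (by simpa using he)
  | cons e' l ih =>
    by_cases hstep : e ∈ kruskalStep F e' ∪ l.toFinset
    · exact ih _ hstep
    have hskipped : (e.map (fromEdgeSet (F : Set (Sym2 V))).connectedComponentMk).IsDiag := by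
      unfold kruskalStep at hstep
      split_ifs at hstep <;> simp_all
    exact isDiag_map_connectedComponentMk_of_le
      (fromEdgeSet_mono (by exact_mod_cast subset_kruskal _ _)) hskipped

section Card

variable [Fintype V]

theorem card_add_card_connectedComponent_kruskalStep (F : Finset (Sym2 V)) (e : Sym2 V) :
    #(kruskalStep F e) +
        Nat.card (fromEdgeSet (kruskalStep F e : Set (Sym2 V))).ConnectedComponent =
      #F + Nat.card (fromEdgeSet (F : Set (Sym2 V))).ConnectedComponent := by
  unfold kruskalStep
  split_ifs with hdiag
  · rfl
  induction e using Sym2.ind with | _ a b => ?_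
  simp only [Sym2.map_mk, Sym2.mk_isDiag_iff, ConnectedComponent.eq] at hdiag
  have hnotMem : s(a, b) ∉ F := fun h =>
    hdiag ((fromEdgeSet_adj _).2 ⟨h, fun hab => hdiag (hab ▸ .rfl)⟩).reachable
  have hsup : fromEdgeSet ((insert s(a, b) F : Finset (Sym2 V)) : Set (Sym2 V)) =
      fromEdgeSet (F : Set (Sym2 V)) ⊔ edge a b := by
    rw [Finset.coe_insert, Set.insert_eq, fromEdgeSet_union, sup_comm, edge]
  rw [Finset.card_insert_of_notMem hnotMem, hsup, ← card_connectedComponent_sup_edge hdiag]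
  ring

theorem card_add_card_connectedComponent_kruskal (F : Finset (Sym2 V)) (l : List (Sym2 V)) :
    #(kruskal F l) + Nat.card (fromEdgeSet (kruskal F l : Set (Sym2 V))).ConnectedComponent =
      #F + Nat.card (fromEdgeSet (F : Set (Sym2 V))).ConnectedComponent := by
  induction l generalizing F with
  | nil => rfl
  | cons e l ih => exact (ih _).trans (card_add_card_connectedComponent_kruskalStep F e)

theorem card_kruskal_inter_drop_add_le {l : List (Sym2 V)} (hl : l.Nodup) (j : ℕ) :
    #(kruskal ∅ l ∩ (l.drop j).toFinset) +
        Nat.card (fromEdgeSet (kruskal ∅ l : Set (Sym2 V))).ConnectedComponent ≤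
      Nat.card (fromEdgeSet (kruskal ∅ (l.take j) : Set (Sym2 V))).ConnectedComponent := by
  have hA := card_add_card_connectedComponent_kruskal ∅ (l.take j)
  have hT := card_add_card_connectedComponent_kruskal ∅ l
  rw [Finset.card_empty, zero_add] at hA hT
  set A := kruskal ∅ (l.take j)
  set T := kruskal ∅ l
  have hAT : A ⊆ T := by
    rw [show T = kruskal A (l.drop j) by rw [← kruskal_append, List.take_append_drop]]
    exact subset_kruskal _ _
  have hAD : Disjoint A (l.drop j).toFinset := by
    refine Finset.disjoint_of_subset_left (by simpa using kruskal_subset ∅ (l.take j)) ?_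
    exact List.disjoint_toFinset_iff_disjoint.2 (List.disjoint_take_drop hl le_rfl)
  have hsdiff := Finset.card_le_card (Finset.subset_sdiff.2 ⟨hAT, hAD⟩)
  have := Finset.card_sdiff_add_card_inter T (l.drop j).toFinset
  omega

end Card

theorem mem_drop_of_not_isDiag_map_kruskal_take {l : List (Sym2 V)} {e : Sym2 V} (he : e ∈ l)
    {j : ℕ} (hcross : ¬(e.map
      (fromEdgeSet (kruskal ∅ (l.take j) : Set (Sym2 V))).connectedComponentMk).IsDiag) :
    e ∈ l.drop j := by
  rw [← List.take_append_drop j l, List.mem_append] at he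
  exact he.resolve_left fun h =>
    hcross (isDiag_map_connectedComponentMk_kruskal _ _ (by simpa using h))

end Kruskal

theorem Finset.exists_nodup_toFinset_eq_pairwise {α β : Type*} [DecidableEq α] [LinearOrder β]
    (s : Finset α) (f : α → β) :
    ∃ l : List α, l.Nodup ∧ l.toFinset = s ∧ l.Pairwise (fun a b => f a ≤ f b) := by
  have hperm := List.mergeSort_perm s.toList (fun a b => decide (f a ≤ f b))
  refine ⟨_, hperm.nodup_iff.2 s.nodup_toList,
    by rw [List.toFinset_eq_of_perm _ _ hperm, Finset.toList_toFinset], ?_⟩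
  simpa using List.pairwise_mergeSort (le := fun a b => decide (f a ≤ f b))
    (by simpa using fun _ _ _ => le_trans) (by simpa using fun a b => le_total (f a) (f b))
    s.toList

theorem List.sum_map_mul_le_of_forall_sum_drop_le {α : Type*} {l : List α} {a b c : α → ℝ}
    (hsorted : l.Pairwise (fun e f => c e ≤ c f)) (hc : ∀ e ∈ l, 0 ≤ c e)
    (hab : ∀ j, ((l.drop j).map a).sum ≤ ((l.drop j).map b).sum) :
    (l.map fun e => a e * c e).sum ≤ (l.map fun e => b e * c e).sum := by
  induction l generalizing c with
  | nil => simp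
  | cons e₀ l ih =>
    obtain ⟨hhead, htail⟩ := List.pairwise_cons.1 hsorted
    have hshift := ih (c := fun e => c e - c e₀) (htail.imp fun h => by linarith)
      (fun e he => by linarith [hhead e he]) (fun j => hab (j + 1))
    have hsplit : ∀ w : α → ℝ, ((e₀ :: l).map fun e => w e * c e).sum =
        ((l.map fun e => w e * (c e - c e₀))).sum + ((e₀ :: l).map w).sum * c e₀ := by
      intro w
      rw [show (fun e => w e * c e) = fun e => w e * (c e - c e₀) + w e * c e₀ by
        funext e; ring]
      simp only [List.map_cons, List.sum_cons, List.sum_map_add, List.sum_map_mul_right]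
      ring
    rw [hsplit, hsplit]
    exact add_le_add hshift (mul_le_mul_of_nonneg_right (hab 0) (hc e₀ List.mem_cons_self))

namespace TSPPath

open scoped Classical

variable {n : ℕ}

theorem mem_Edges_mk {a b : Fin n} : s(a, b) ∈ Edges n ↔ a ≠ b := by
  simp [Edges]

theorem mem_cutSet_mk {S : Finset (Fin n)} {a b : Fin n} :
    s(a, b) ∈ cutSet n S ↔ a ≠ b ∧ (a ∈ S ↔ b ∉ S) := by
  simp only [cutSet, Finset.mem_filter, mem_Edges_mk, Sym2.eq_iff]
  grind

theorem mem_inSet_mk {S : Finset (Fin n)} {a b : Fin n} :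
    s(a, b) ∈ inSet n S ↔ a ≠ b ∧ a ∈ S ∧ b ∈ S := by
  simp [inSet, mem_Edges_mk]

theorem cutSet_singleton (v : Fin n) : cutSet n {v} = (Edges n).filter (v ∈ ·) := by
  ext e
  induction e using Sym2.ind with | _ a b => ?_
  simp only [mem_cutSet_mk, Finset.mem_filter, mem_Edges_mk, Finset.mem_singleton, Sym2.mem_iff]
  grind

theorem cutSet_univ : cutSet n univ = ∅ := by
  simp [cutSet]

theorem inSet_univ : inSet n univ = Edges n := by
  simp [inSet]

theorem sum_sum_cutSet_singleton (x : Sym2 (Fin n) → ℝ) (S : Finset (Fin n)) :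
    ∑ v ∈ S, ∑ e ∈ cutSet n {v}, x e =
      2 * ∑ e ∈ inSet n S, x e + ∑ e ∈ cutSet n S, x e := by
  have hin : inSet n S ⊆ Edges n := Finset.filter_subset _ _
  have hcut : cutSet n S ⊆ Edges n := Finset.filter_subset _ _
  rw [← Finset.inter_eq_right.2 hin, ← Finset.inter_eq_right.2 hcut,
    ← Finset.sum_ite_mem, ← Finset.sum_ite_mem, Finset.mul_sum, ← Finset.sum_add_distrib]
  simp only [cutSet_singleton, Finset.sum_filter]
  rw [Finset.sum_comm]
  refine Finset.sum_congr rfl fun e he => ?_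
  induction e using Sym2.ind with | _ a b => ?_
  have hab : a ≠ b := mem_Edges_mk.1 he
  rw [← Finset.sum_filter, Finset.sum_const, nsmul_eq_mul]
  simp only [Sym2.mem_iff, Finset.filter_or, Finset.filter_eq']
  by_cases ha : a ∈ S <;> by_cases hb : b ∈ S <;>
    simp [ha, hb, hab, mem_inSet_mk, mem_cutSet_mk]

section Feasible

variable {s t : Fin n} {x : Sym2 (Fin n) → ℝ}

theorem HKPathFeasible.sum_cutSet_singleton (hst : s ≠ t) (hx : HKPathFeasible n s t x)
    (v : Fin n) :
    ∑ e ∈ cutSet n {v}, x e = 2 - (if v = s then 1 else 0) - (if v = t then 1 else 0) := by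
  obtain ⟨-, hs, ht, hint, -⟩ := hx
  by_cases hvs : v = s
  · subst hvs
    simp [hst, hs]
    norm_num
  by_cases hvt : v = t
  · subst hvt
    simp [hvs, ht]
    norm_num
  simp [hvs, hvt, hint v hvs hvt]

theorem HKPathFeasible.two_mul_sum_inSet_add_sum_cutSet (hst : s ≠ t)
    (hx : HKPathFeasible n s t x) (S : Finset (Fin n)) :
    2 * ∑ e ∈ inSet n S, x e + ∑ e ∈ cutSet n S, x e =
      2 * #S - (if s ∈ S then 1 else 0) - (if t ∈ S then 1 else 0) := by
  rw [← sum_sum_cutSet_singleton, Finset.sum_congr rfl fun v _ => hx.sum_cutSet_singleton hst v]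
  simp [Finset.sum_sub_distrib, Finset.sum_ite_eq']
  ring

theorem HKPathFeasible.sum_Edges (hst : s ≠ t) (hx : HKPathFeasible n s t x) :
    ∑ e ∈ Edges n, x e = n - 1 := by
  have h := hx.two_mul_sum_inSet_add_sum_cutSet hst univ
  simp only [inSet_univ, cutSet_univ, Finset.sum_empty, Finset.mem_univ, if_true,
    Finset.card_univ, Fintype.card_fin] at h
  linarith

theorem HKPathFeasible.sum_inSet_le (hst : s ≠ t) (hx : HKPathFeasible n s t x)
    {S : Finset (Fin n)} (hS : S.Nonempty) : ∑ e ∈ inSet n S, x e ≤ #S - 1 := by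
  have h := hx.two_mul_sum_inSet_add_sum_cutSet hst S
  obtain ⟨hx0, -, -, -, hodd, heven⟩ := hx
  by_cases hU : S = univ
  · subst hU
    simp only [cutSet_univ, Finset.sum_empty, Finset.mem_univ, if_true] at h
    linarith
  have hcut : 2 ≤ (if s ∈ S then 1 else 0) + (if t ∈ S then 1 else 0) +
      ∑ e ∈ cutSet n S, x e := by
    by_cases hs : s ∈ S <;> by_cases ht : t ∈ S <;> simp only [hs, ht, if_true, if_false]
    · linarith [Finset.sum_nonneg fun e (_ : e ∈ cutSet n S) => hx0 e]
    · linarith [hodd S hS hU (.inl ⟨hs, ht⟩)]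
    · linarith [hodd S hS hU (.inr ⟨hs, ht⟩)]
    · linarith [heven S hS hU (by tauto)]
  linarith

theorem HKPathFeasible.card_image_sub_one_le (hst : s ≠ t) (hx : HKPathFeasible n s t x)
    {ι : Type*} (p : Fin n → ι) :
    (#(univ.image p) : ℝ) - 1 ≤
      ∑ e ∈ (Edges n).filter (fun e => ¬(e.map p).IsDiag), x e := by
  set fiber : ι → Finset (Fin n) := fun i => univ.filter (p · = i)
  have hnoncross : (Edges n).filter (fun e => (e.map p).IsDiag) =
      (univ.image p).biUnion fun i => inSet n (fiber i) := by
    ext e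
    induction e using Sym2.ind with | _ a b => ?_
    simp [fiber, mem_inSet_mk, mem_Edges_mk]
    grind
  have hdisj : (univ.image p : Set ι).PairwiseDisjoint fun i => inSet n (fiber i) := by
    intro i _ j _ hij
    refine Finset.disjoint_left.2 fun e hi hj => ?_
    induction e using Sym2.ind with | _ a b => ?_
    simp only [fiber, mem_inSet_mk, Finset.mem_filter, Finset.mem_univ, true_and] at hi hj
    exact hij (hi.2.1.symm.trans hj.2.1)
  have hnoncross_le : ∑ e ∈ (Edges n).filter (fun e => (e.map p).IsDiag), x e ≤
      n - #(univ.image p) := by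
    rw [hnoncross, Finset.sum_biUnion hdisj]
    calc _ ≤ ∑ i ∈ univ.image p, ((#(fiber i) : ℝ) - 1) := by
          refine Finset.sum_le_sum fun i hi => hx.sum_inSet_le hst ?_
          obtain ⟨a, -, rfl⟩ := Finset.mem_image.1 hi
          exact ⟨a, by simp [fiber]⟩
      _ = n - #(univ.image p) := by
          rw [Finset.sum_sub_distrib, ← Nat.cast_sum, ← Finset.card_eq_sum_card_image]
          simp
  have := Finset.sum_filter_add_sum_filter_not (Edges n) (fun e => (e.map p).IsDiag) x
  linarith [hx.sum_Edges hst]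

end Feasible

open SimpleGraph

theorem isSpanningTree_kruskal (hn : 0 < n) {l : List (Sym2 (Fin n))}
    (hl : l.toFinset = Edges n) : IsSpanningTree n (kruskal ∅ l) := by
  have : Nonempty (Fin n) := ⟨⟨0, hn⟩⟩
  have hconn : (fromEdgeSet (kruskal ∅ l : Set (Sym2 (Fin n)))).Connected := by
    refine (connected_iff _).2 ⟨fun a b => ?_, inferInstance⟩
    by_cases hab : a = b
    · exact hab ▸ .rfl
    simpa [ConnectedComponent.eq] using isDiag_map_connectedComponentMk_kruskal ∅ l
      (e := s(a, b)) (by simp [hl, mem_Edges_mk, hab])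
  have hcard := card_add_card_connectedComponent_kruskal ∅ l
  rw [hconn.card_connectedComponent, Finset.card_empty, Finset.coe_empty, fromEdgeSet_empty,
    card_connectedComponent_bot, Nat.card_eq_fintype_card, Fintype.card_fin] at hcard
  exact ⟨(kruskal_subset ∅ l).trans (by simp [hl]), hconn, by omega⟩

theorem HKPathFeasible.card_kruskal_inter_drop_le {s t : Fin n} {x : Sym2 (Fin n) → ℝ}
    (hst : s ≠ t) (hx : HKPathFeasible n s t x) {l : List (Sym2 (Fin n))} (hnd : l.Nodup)
    (hl : l.toFinset = Edges n) (j : ℕ) :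
    (#(kruskal ∅ l ∩ (l.drop j).toFinset) : ℝ) ≤ ∑ e ∈ (l.drop j).toFinset, x e := by
  set G := fromEdgeSet (kruskal ∅ (l.take j) : Set (Sym2 (Fin n)))
  have hcount := card_kruskal_inter_drop_add_le hnd j
  rw [(isSpanningTree_kruskal s.pos hl).2.1.card_connectedComponent] at hcount
  have hcross := hx.card_image_sub_one_le hst G.connectedComponentMk
  rw [Finset.image_univ_of_surjective (show Function.Surjective G.connectedComponentMk from
    Quot.mk_surjective), Finset.card_univ, ← Nat.card_eq_fintype_card] at hcross
  have hsub : (Edges n).filter (fun e => ¬(e.map G.connectedComponentMk).IsDiag) ⊆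
      (l.drop j).toFinset := fun e he => by
    rw [Finset.mem_filter, ← hl, List.mem_toFinset] at he
    exact List.mem_toFinset.2 (mem_drop_of_not_isDiag_map_kruskal_take he.1 he.2)
  have := Finset.sum_le_sum_of_subset_of_nonneg hsub fun e _ _ => hx.1 e
  have : (#(kruskal ∅ l ∩ (l.drop j).toFinset) : ℝ) + 1 ≤ Nat.card G.ConnectedComponent :=
    mod_cast hcount
  linarith

theorem spanning_tree_bound_general (n : ℕ) (s t : Fin n) (hst : s ≠ t)
    (c : Sym2 (Fin n) → ℝ) (hc : ∀ e, 0 ≤ c e)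
    (x : Sym2 (Fin n) → ℝ) (hx : HKPathFeasible n s t x) :
    ∃ H : Finset (Sym2 (Fin n)), IsSpanningTree n H ∧
      ∑ e ∈ H, c e ≤ ∑ e ∈ Edges n, x e * c e := by
  obtain ⟨l, hnd, hl, hsorted⟩ := (Edges n).exists_nodup_toFinset_eq_pairwise c
  have hT := isSpanningTree_kruskal s.pos hl
  refine ⟨kruskal ∅ l, hT, ?_⟩
  have hsum : ∀ (f : Sym2 (Fin n) → ℝ) (j : ℕ),
      ((l.drop j).map f).sum = ∑ e ∈ (l.drop j).toFinset, f e :=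
    fun f j => (List.sum_toFinset f (hnd.sublist (List.drop_sublist j l))).symm
  have habel := List.sum_map_mul_le_of_forall_sum_drop_le hsorted (fun e _ => hc e)
    (a := fun e => if e ∈ kruskal ∅ l then 1 else 0) (b := x) fun j => by
      rw [hsum, hsum, Finset.sum_boole]
      simpa [Finset.filter_mem_eq_inter, Finset.inter_comm] using
        hx.card_kruskal_inter_drop_le hst hnd hl j
  rw [← List.sum_toFinset _ hnd, ← List.sum_toFinset _ hnd, hl] at habel
  simpa [Finset.sum_ite_mem, Finset.inter_eq_right.2 hT.1] using habel

/-- (Spanning tree bound.) For any nonnegative edge cost `c` and any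
feasible Held–Karp solution `x`, there is a spanning tree `H` of the complete graph with
`c(H) ≤ c(x)`; in particular the minimum spanning tree costs at most `c(x)`. -/
theorem spanning_tree_bound (n : ℕ) (hn : 2 ≤ n) (s t : Fin n) (hst : s ≠ t)
    (c : Sym2 (Fin n) → ℝ) (hc : ∀ e, 0 ≤ c e)
    (x : Sym2 (Fin n) → ℝ) (hx : HKPathFeasible n s t x) :
    ∃ H : Finset (Sym2 (Fin n)), IsSpanningTree n H ∧
      ∑ e ∈ H, c e ≤ ∑ e ∈ Edges n, x e * c e :=
  spanning_tree_bound_general n s t hst c hc x hx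

end TSPPath
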